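/- Lemma (normalisation and sequential composition): For every guard e and all pseudo-types 𝕋, 𝕋': nf_e(𝕋 ; nf_e(𝕋')) = nf_e(𝕋 ; 𝕋'). -/
import Mathlib


namespace WSI

/-! ## Basic entities -/

abbrev Var := ℕ
abbrev Chan := ℕ
abbrev Part := ℕ
abbrev SName := ℕ
abbrev Srt := ℕ
/-- A value carries its sort. -/
abbrev Value := Srt × ℕ

def HasSort (v : Value) (d : Srt) : Prop := v.1 = d

/-- A store maps variables to values and shared names to tuples of session channels. -/
structure Store where
  vars : Var → Option Value
  sess : SName → Option (List Chan)

def Store.updVar (σ : Store) (x : Var) (v : Value) : Store :=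
  ⟨Function.update σ.vars x (some v), σ.sess⟩

def Store.updSess (σ : Store) (u : SName) (ys : List Chan) : Store :=
  ⟨σ.vars, Function.update σ.sess u (some ys)⟩

def Store.emptyS : Store := ⟨fun _ => none, fun _ => none⟩

def Store.HasChan (σ : Store) (y : Chan) : Prop := ∃ u l, σ.sess u = some l ∧ y ∈ l
def Store.DomV (σ : Store) : Set Var := {x | σ.vars x ≠ none}
def Store.DomU (σ : Store) : Set SName := {u | σ.sess u ≠ none}
def Store.SubDom (σ σ' : Store) : Prop := σ.DomV ⊆ σ'.DomV ∧ σ.DomU ⊆ σ'.DomU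
def Store.Extends (σ' σ : Store) : Prop :=
  (∀ x v, σ.vars x = some v → σ'.vars x = some v) ∧
  (∀ u l, σ.sess u = some l → σ'.sess u = some l)

/-! ## Guards (modeled semantically) -/

abbrev Guard := Store → Bool

def Guard.and (e e' : Guard) : Guard := fun σ => e σ && e' σ
def Guard.or (e e' : Guard) : Guard := fun σ => e σ || e' σ
def Guard.not (e : Guard) : Guard := fun σ => !(e σ)
def Guard.tt : Guard := fun _ => true
def Guard.ff : Guard := fun _ => false
def Guard.Iff (e e' : Guard) : Prop := ∀ σ, e σ = e' σ
def Guard.Imp (e e' : Guard) : Prop := ∀ σ, e σ = true → e' σ = true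
def Guard.IsFalse (e : Guard) : Prop := ∀ σ, e σ = false
def Guard.IndepVar (e : Guard) (x : Var) : Prop := ∀ σ v, e (σ.updVar x v) = e σ

/-! ## Pseudo-types -/

mutual
inductive PT : Type where
  | endP : Guard → PT
  | intC : Branches → PT
  | extC : Branches → PT
  | seqT : PT → PT → PT
  | iter : PT → PT
inductive Branches : Type where
  | nil : Branches
  | cons : Guard → Chan → Srt → PT → Branches → Branches
end

def Branches.toList : Branches → List (Guard × Chan × Srt × PT)
  | .nil => []
  | .cons e y d T bs => (e, y, d, T) :: bs.toList

def Branches.ofList : List (Guard × Chan × Srt × PT) → Branches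
  | [] => .nil
  | (e, y, d, T) :: l => .cons e y d T (Branches.ofList l)

def Branches.append : Branches → Branches → Branches
  | .nil, bs => bs
  | .cons e y d T bs, bs' => .cons e y d T (bs.append bs')

/-- Postfix every continuation with `;T'`. -/
def Branches.seqAll : Branches → PT → Branches
  | .nil, _ => .nil
  | .cons e y d T bs, T' => .cons e y d (.seqT T T') (bs.seqAll T')

def Branches.chans : Branches → List Chan
  | .nil => []
  | .cons _ y _ _ bs => y :: bs.chans

-- The weight ω of a pseudo-type.
mutual
def PT.omega : PT → ℕ
  | .endP _ => 1
  | .intC bs => 1 + bs.maxW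
  | .extC bs => 1 + bs.maxW
  | .seqT a b => 2 * a.omega + b.omega
  | .iter a => 1 + a.omega
def Branches.maxW : Branches → ℕ
  | .nil => 0
  | .cons _ _ _ T bs => max T.omega bs.maxW
end

-- Guard erasure (deleting every guard of a pseudo-type).
mutual
def PT.erase : PT → PT
  | .endP _ => .endP Guard.tt
  | .intC bs => .intC bs.eraseBr
  | .extC bs => .extC bs.eraseBr
  | .seqT a b => .seqT a.erase b.erase
  | .iter a => .iter a.erase
def Branches.eraseBr : Branches → Branches
  | .nil => .nil
  | .cons _ y d T bs => .cons Guard.tt y d T.erase bs.eraseBr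
end

-- Semantic independence of the guards of a pseudo-type from a variable.
mutual
def PT.IndepVar : PT → Var → Prop
  | .endP e, x => Guard.IndepVar e x
  | .intC bs, x => bs.IndepVarBr x
  | .extC bs, x => bs.IndepVarBr x
  | .seqT a b, x => a.IndepVar x ∧ b.IndepVar x
  | .iter a, x => a.IndepVar x
def Branches.IndepVarBr : Branches → Var → Prop
  | .nil, _ => True
  | .cons e _ _ T bs, x => Guard.IndepVar e x ∧ T.IndepVar x ∧ bs.IndepVarBr x
end

/-- All the branches are dead under assumption `e`. -/
def AllDead (e : Guard) (bs : Branches) : Prop :=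
  ∀ b ∈ bs.toList, Guard.IsFalse (Guard.and e b.1)

/-- `EndForm e T` holds iff the normal form `nf_e(T)` is of the shape `[e']end`. -/
inductive EndForm : Guard → PT → Prop where
  | endE : EndForm e (.endP e')
  | intE : AllDead e bs → EndForm e (.intC bs)
  | extE : AllDead e bs → EndForm e (.extC bs)
  | seqEndE : EndForm (Guard.and e e') T → EndForm e (.seqT (.endP e') T)
  | seqIntE : AllDead e bs → EndForm e (.seqT (.intC bs) T)
  | seqExtE : AllDead e bs → EndForm e (.seqT (.extC bs) T)
  | seqSeqE : EndForm e (.seqT T₁ (.seqT T₂ T₃)) → EndForm e (.seqT (.seqT T₁ T₂) T₃)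
  | seqIterE : EndForm e T₁ → EndForm e (.seqT (.iter T₁) T₂)
  | iterE : EndForm e T → EndForm e (.iter T)

-- The normalisation `nf_e(𝕋)`, presented as a relation defined by the
-- defining equations of the paper.
mutual
inductive NF : Guard → PT → PT → Prop where
  | endN : NF e (.endP e') (.endP (Guard.and e e'))
  | intAllDead : AllDead e bs → NF e (.intC bs) (.endP Guard.ff)
  | intN : ¬ AllDead e bs → NFBr e bs bs' → NF e (.intC bs) (.intC bs')
  | extAllDead : AllDead e bs → NF e (.extC bs) (.endP Guard.ff)
  | extN : ¬ AllDead e bs → NFBr e bs bs' → NF e (.extC bs) (.extC bs')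
  | seqEnd : NF (Guard.and e e') T U → NF e (.seqT (.endP e') T) U
  | seqInt : NF e (.intC (Branches.seqAll bs T)) U → NF e (.seqT (.intC bs) T) U
  | seqExt : NF e (.extC (Branches.seqAll bs T)) U → NF e (.seqT (.extC bs) T) U
  | seqSeq : NF e (.seqT T₁ (.seqT T₂ T₃)) U → NF e (.seqT (.seqT T₁ T₂) T₃) U
  | seqIterEnd : NF e T₁ (.endP e') → NF e (.seqT (.iter T₁) T₂) (.endP e')
  | seqIterN : ¬ EndForm e T₁ → NF e (.iter T₁) U₁ → NF e T₂ U₂ →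
      NF e (.seqT (.iter T₁) T₂) (.seqT U₁ U₂)
  | iterEnd : NF e T (.endP e') → NF e (.iter T) (.endP e')
  | iterN : ¬ EndForm e T → NF e T U → NF e (.iter T) (.iter U)
inductive NFBr : Guard → Branches → Branches → Prop where
  | nil : NFBr e .nil .nil
  | consDead : Guard.IsFalse (Guard.and e e') → NFBr e bs bs' →
      NFBr e (.cons e' y d T bs) bs'
  | consLive : ¬ Guard.IsFalse (Guard.and e e') → NF (Guard.and e' e) T U → NFBr e bs bs' →
      NFBr e (.cons e' y d T bs) (.cons (Guard.and e' e) y d U bs')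
end

/-- The recursive-call relation of the defining equations of `nf`:
    `NFCall (e'',T'') (e,T)` holds when the equation applied to `nf_e(T)`
    makes the recursive call `nf_{e''}(T'')`. -/
inductive NFCall : Guard × PT → Guard × PT → Prop where
  | intBr : (e', y, d, T) ∈ Branches.toList bs → ¬ Guard.IsFalse (Guard.and e e') →
      NFCall (Guard.and e' e, T) (e, .intC bs)
  | extBr : (e', y, d, T) ∈ Branches.toList bs → ¬ Guard.IsFalse (Guard.and e e') →
      NFCall (Guard.and e' e, T) (e, .extC bs)
  | seqEnd : NFCall (Guard.and e e', T) (e, .seqT (.endP e') T)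
  | seqInt : NFCall (e, .intC (Branches.seqAll bs T)) (e, .seqT (.intC bs) T)
  | seqExt : NFCall (e, .extC (Branches.seqAll bs T)) (e, .seqT (.extC bs) T)
  | seqSeq : NFCall (e, .seqT T₁ (.seqT T₂ T₃)) (e, .seqT (.seqT T₁ T₂) T₃)
  | seqIterTest : NFCall (e, T₁) (e, .seqT (.iter T₁) T₂)
  | seqIterL : NFCall (e, .iter T₁) (e, .seqT (.iter T₁) T₂)
  | seqIterR : NFCall (e, T₂) (e, .seqT (.iter T₁) T₂)
  | iterTest : NFCall (e, T) (e, .iter T)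

/-! ## Mergeability and merge -/

mutual
inductive Mergeable : PT → PT → Prop where
  | endM : Mergeable (.endP e) (.endP e')
  | extM : MrgBr bs bs' → Mergeable (.extC bs) (.extC bs')
  | intM : MrgBr common common' →
      (Branches.chans common).Disjoint (Branches.chans extra₁) →
      (Branches.chans common).Disjoint (Branches.chans extra₂) →
      (Branches.chans extra₁).Disjoint (Branches.chans extra₂) →
      Mergeable (.intC (common.append extra₁)) (.intC (common'.append extra₂))
  | seqM : Mergeable a a' → Mergeable b b' → Mergeable (.seqT a b) (.seqT a' b')
  | iterM : Mergeable a a' → Mergeable (.iter a) (.iter a')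
inductive MrgBr : Branches → Branches → Prop where
  | nil : MrgBr .nil .nil
  | cons : Guard.IsFalse (Guard.and e e') → Mergeable T T' → MrgBr bs bs' →
      MrgBr (.cons e y d T bs) (.cons e' y d T' bs')
end

mutual
inductive Merge : PT → PT → PT → Prop where
  | endM : Merge (.endP e) (.endP e') (.endP (Guard.or e e'))
  | extM : MergeBr bs bs' bs'' → Merge (.extC bs) (.extC bs') (.extC bs'')
  | intM : Merge (.intC bs) (.intC bs') (.intC (bs.append bs'))
  | seqM : Merge a a' a'' → Merge b b' b'' → Merge (.seqT a b) (.seqT a' b') (.seqT a'' b'')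
  | iterM : Merge a a' a'' → Merge (.iter a) (.iter a') (.iter a'')
inductive MergeBr : Branches → Branches → Branches → Prop where
  | nil : MergeBr .nil .nil .nil
  | cons : Merge T T' T'' → MergeBr bs bs' bs'' →
      MergeBr (.cons e y d T bs) (.cons e' y d T' bs') (.cons (Guard.or e e') y d T'' bs'')
end

/-! ## Global types -/

inductive GT : Type where
  | comm : Part → List (Part × Chan × Srt × GT) → GT
  | seqG : GT → GT → GT
  | iterG : GT → (Part → Option (Chan × Srt)) → GT
  | endG : GT

inductive GT.HasPart : GT → Part → Prop where
  | commS : GT.HasPart (.comm p bs) p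
  | commR : (q, y, d, G) ∈ bs → GT.HasPart (.comm p bs) q
  | commC : (q, y, d, G) ∈ bs → GT.HasPart G r → GT.HasPart (.comm p bs) r
  | seqL : GT.HasPart G₁ r → GT.HasPart (.seqG G₁ G₂) r
  | seqR : GT.HasPart G₂ r → GT.HasPart (.seqG G₁ G₂) r
  | iterI : GT.HasPart G r → GT.HasPart (.iterG G f) r

inductive GT.Ready : GT → Part → Prop where
  | comm : GT.Ready (.comm p bs) p
  | seq : GT.Ready G₁ p → GT.Ready (.seqG G₁ G₂) p
  | iter : GT.Ready G p → GT.Ready (.iterG G f) p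

/-! ## Events and annotated traces -/

inductive Event : Type where
  | sendE : Part → Chan → Srt → Event
  | recvE : Part → Chan → Srt → Event
deriving DecidableEq

inductive Item : Type where
  | ev : Event → Item
  | opt : List Item → Item

abbrev Trace := List Item

/-- The trace preorder ⋖ : the least preorder with `[r] ⋖ ε`, `ε ⋖ r` and
    compatibility with concatenation. -/
inductive TracePre : Trace → Trace → Prop where
  | drop (r : Trace) : TracePre [Item.opt r] []
  | emp (r : Trace) : TracePre [] r
  | cmp : TracePre r₁ r₁' → TracePre r₂ r₂' → TracePre (r₁ ++ r₂) (r₁' ++ r₂')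
  | refl (r : Trace) : TracePre r r
  | trans : TracePre r₁ r₂ → TracePre r₂ r₃ → TracePre r₁ r₃

/-- `R₂` covers `R₁`, written `R₁ ⋐ R₂`. -/
def Covers (R₁ R₂ : Set Trace) : Prop := ∀ r ∈ R₁, ∃ r' ∈ R₂, TracePre r r'

/-! ## Runs of a global type -/

/-- The termination events appended at the end of an iteration. -/
def termTrace (p : Part) (fl : List (Part × Chan × Srt)) : Trace :=
  fl.flatMap (fun b => [Item.ev (.sendE p b.2.1 b.2.2), Item.ev (.recvE b.1 b.2.1 b.2.2)])

mutual
inductive GRuns : GT → Trace → Prop where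
  | endR : GRuns .endG []
  | comm : (q, y, d, G) ∈ bs → GRuns G r →
      GRuns (.comm p bs) (Item.ev (.sendE p y d) :: Item.ev (.recvE q y d) :: r)
  | seqR : GRuns G₁ r₁ → GRuns G₂ r₂ → GRuns (.seqG G₁ G₂) (r₁ ++ r₂)
  | iterR {G : GT} {f : Part → Option (Chan × Srt)} {r : Trace} {p : Part}
      {fl : List (Part × Chan × Srt)} :
      GRunsAux G f r → GT.Ready G p → (∀ q, GT.Ready G q → q = p) →
      (∀ q, GT.HasPart G q ↔ (q = p ∨ q ∈ fl.map Prod.fst)) →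
      (fl.map Prod.fst).Nodup → p ∉ fl.map Prod.fst →
      (∀ b ∈ fl, f b.1 = some (b.2.1, b.2.2)) →
      GRuns (.iterG G f) (r ++ termTrace p fl)
inductive GRunsAux : GT → (Part → Option (Chan × Srt)) → Trace → Prop where
  | base : GRuns G r → GRunsAux G f r
  | step : GRuns G r₁ → GRunsAux G f r₂ → GRunsAux G f (r₁ ++ [Item.opt r₂])
end

/-! ## Projection of global types -/

/-- The sequence of termination outputs of an iteration controller. -/
def sendSeqPT : List (Chan × Srt) → PT
  | [] => .endP Guard.tt
  | (y, d) :: rest => .seqT (.intC (.cons Guard.tt y d (.endP Guard.tt) .nil)) (sendSeqPT rest)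

inductive MergeList : List PT → PT → Prop where
  | single : MergeList [T] T
  | cons : MergeList Ts T' → Merge T T' T'' → MergeList (T :: Ts) T''

mutual
inductive Proj : GT → Part → PT → Prop where
  | endRule : Proj .endG q (.endP Guard.tt)
  | sender : ProjBr bs p bs' → Proj (.comm p bs) p (.intC bs')
  | other : q ≠ p → ProjOther bs q Ts → MergeList Ts T → Proj (.comm p bs) q T
  | seqRule : Proj G₁ q T₁ → Proj G₂ q T₂ → Proj (.seqG G₁ G₂) q (.seqT T₁ T₂)
  | iterCtrl {G : GT} {p : Part} {fl : List (Part × Chan × Srt)}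
      {f : Part → Option (Chan × Srt)} {T : PT} :
      GT.Ready G p → (∀ q, GT.Ready G q → q = p) →
      (∀ q, GT.HasPart G q ↔ (q = p ∨ q ∈ fl.map Prod.fst)) →
      (∀ b ∈ fl, f b.1 = some (b.2.1, b.2.2)) →
      Proj G p T →
      Proj (.iterG G f) p (.seqT (.iter T) (sendSeqPT (fl.map (fun b => (b.2.1, b.2.2)))))
  | iterOther : GT.Ready G p → (∀ q', GT.Ready G q' → q' = p) → q ≠ p →
      f q = some (y, d) → Proj G q T →
      Proj (.iterG G f) q (.seqT (.iter T) (.extC (.cons Guard.tt y d (.endP Guard.tt) .nil)))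
inductive ProjBr : List (Part × Chan × Srt × GT) → Part → Branches → Prop where
  | nil : ProjBr [] p .nil
  | cons : Proj G p T → ProjBr bs p bs' →
      ProjBr ((q, y, d, G) :: bs) p (.cons Guard.tt y d T bs')
inductive ProjOther : List (Part × Chan × Srt × GT) → Part → List PT → Prop where
  | nil : ProjOther [] q []
  | consRecv : Proj G q T → ProjOther bs q Ts →
      ProjOther ((q, y, d, G) :: bs) q (PT.extC (.cons Guard.tt y d T .nil) :: Ts)
  | consOther : q' ≠ q → Proj G q T → ProjOther bs q Ts →
      ProjOther ((q', y, d, G) :: bs) q (T :: Ts)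
end

/-! ## Specifications -/

structure Spec where
  sh : SName → Option GT
  ep : (List Chan × Part) → Option PT
  qu : Chan → Option (List Srt)

def Spec.emptyS : Spec := ⟨fun _ => none, fun _ => none, fun _ => none⟩

def Spec.updEp (Δ : Spec) (k : List Chan × Part) (T : PT) : Spec :=
  { Δ with ep := Function.update Δ.ep k (some T) }

def Spec.updQu (Δ : Spec) (y : Chan) (q : List Srt) : Spec :=
  { Δ with qu := Function.update Δ.qu y (some q) }

/-- Sequential composition of specifications (pointwise on endpoints). -/
def Spec.seqS (Δ₁ Δ₂ : Spec) : Spec :=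
  { sh := Δ₁.sh, qu := Δ₁.qu,
    ep := fun k => match Δ₁.ep k, Δ₂.ep k with
      | some a, some b => some (.seqT a b)
      | some a, none => some a
      | none, some b => some b
      | none, none => none }

/-- Pointwise iteration of a specification. -/
def Spec.iterS (Δ : Spec) : Spec :=
  { Δ with ep := fun k => (Δ.ep k).map .iter }

/-- Disjoint union of specifications `Δ₁, Δ₂`. -/
def Spec.union (Δ₁ Δ₂ : Spec) : Spec :=
  { sh := fun u => (Δ₁.sh u).orElse (fun _ => Δ₂.sh u),
    ep := fun k => (Δ₁.ep k).orElse (fun _ => Δ₂.ep k),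
    qu := fun y => (Δ₁.qu y).orElse (fun _ => Δ₂.qu y) }

/-- Add to a specification a session on channels `ys` with endpoints `eps`
    and empty queues. -/
def Spec.addSession (Δ : Spec) (ys : List Chan) (eps : List (Part × PT)) : Spec :=
  let Δ₁ := eps.foldl (fun a pe => a.updEp (ys, pe.1) pe.2) Δ
  ys.foldl (fun a y => a.updQu y []) Δ₁

/-- Every endpoint pseudo-type of `Δ` has normal form `[e]end`. -/
def Spec.EndOnly (Δ : Spec) : Prop :=
  ∀ k T, Δ.ep k = some T → ∃ e, NF Guard.tt T (.endP e)

/-- Every endpoint pseudo-type of `Δ` is in normal form. -/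
def Spec.Normal (Δ : Spec) : Prop :=
  ∀ k T, Δ.ep k = some T → NF Guard.tt T T

/-- Every endpoint pseudo-type of `Δ` normalises to an internal choice. -/
def Spec.Active (Δ : Spec) : Prop :=
  ∀ k T, Δ.ep k = some T → ∃ bs, NF Guard.tt T (.intC bs)

/-! ## Runs of specifications -/

inductive TypeRuns (ys : List Chan) : Spec → Trace → Prop where
  | comSend {Δ : Spec} {p : Part} {bs : Branches} {e : Guard} {y : Chan} {d : Srt}
      {T : PT} {q : List Srt} {r : Trace} :
      Δ.ep (ys, p) = some (.intC bs) →
      (e, y, d, T) ∈ Branches.toList bs →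
      Δ.qu y = some q →
      TypeRuns ys ((Δ.updEp (ys, p) T).updQu y (q ++ [d])) r →
      TypeRuns ys Δ (Item.ev (.sendE p y d) :: r)
  | comRecv {Δ : Spec} {p : Part} {bs : Branches} {e : Guard} {y : Chan} {d : Srt}
      {T : PT} {q : List Srt} {r : Trace} :
      Δ.ep (ys, p) = some (.extC bs) →
      (e, y, d, T) ∈ Branches.toList bs →
      Δ.qu y = some (d :: q) →
      TypeRuns ys ((Δ.updEp (ys, p) T).updQu y q) r →
      TypeRuns ys Δ (Item.ev (.recvE p y d) :: r)
  | it₁ {Δ : Spec} {r : Trace} : TypeRuns ys Δ r → TypeRuns ys Δ.iterS r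
  | it₂ {Δ : Spec} {r₁ r₂ : Trace} : TypeRuns ys Δ r₁ → TypeRuns ys Δ.iterS r₂ →
      TypeRuns ys Δ.iterS (r₁ ++ [Item.opt r₂])
  | endR {Δ : Spec} : Spec.EndOnly Δ → (∀ y ∈ ys, Δ.qu y = some []) → TypeRuns ys Δ []
  | seqR {Δ₁ Δ₂ : Spec} {r₁ r₂ : Trace} :
      TypeRuns ys Δ₁ r₁ → TypeRuns ys Δ₂ r₂ → TypeRuns ys (Δ₁.seqS Δ₂) (r₁ ++ r₂)

/-! ## τ-transitions of specifications -/

inductive SpecTau : Spec → Spec → Prop where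
  | com₁ {Δ : Spec} {ys : List Chan} {p : Part} {bs : Branches} {e : Guard}
      {y : Chan} {d : Srt} {T : PT} {q : List Srt} :
      Δ.ep (ys, p) = some (.intC bs) → (e, y, d, T) ∈ Branches.toList bs →
      Δ.qu y = some q →
      SpecTau Δ ((Δ.updEp (ys, p) T).updQu y (q ++ [d]))
  | com₂ {Δ : Spec} {ys : List Chan} {p : Part} {bs : Branches} {e : Guard}
      {y : Chan} {d : Srt} {T : PT} {q : List Srt} :
      Δ.ep (ys, p) = some (.extC bs) → (e, y, d, T) ∈ Branches.toList bs →
      Δ.qu y = some (d :: q) →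
      SpecTau Δ ((Δ.updEp (ys, p) T).updQu y q)
  | init {Δ : Spec} {ys' : List Chan} {eps : List (Part × PT)} :
      (∀ ys₀ p, (∃ y ∈ ys₀, y ∈ ys') → Δ.ep (ys₀, p) = none) →
      (∀ y ∈ ys', Δ.qu y = none) →
      SpecTau Δ (Δ.addSession ys' eps)
  | seq {Δ₁ Δ₁' Δ₂ : Spec} : SpecTau Δ₁ Δ₁' → SpecTau (Δ₁.seqS Δ₂) (Δ₁'.seqS Δ₂)
  | loop₀ {Δ : Spec} :
      SpecTau Δ.iterS { sh := Δ.sh, ep := fun _ => none, qu := fun _ => none }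
  | loop₁ {Δ : Spec} : SpecTau Δ.iterS Δ
  | loop₂ {Δ : Spec} : SpecTau Δ.iterS (Δ.seqS Δ.iterS)

end WSI

namespace WSI

/-! ### Auxiliary lemmas -/

theorem PT.omega_pos : ∀ T : PT, 0 < T.omega
  | .endP _ => by simp [PT.omega]
  | .intC _ => by simp [PT.omega]
  | .extC _ => by simp [PT.omega]
  | .seqT a b => by have := PT.omega_pos b; simp [PT.omega]; omega
  | .iter _ => by simp [PT.omega]

theorem mem_maxW : ∀ (bs : Branches) {e' : Guard} {y : Chan} {d : Srt} {T' : PT},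
    (e', y, d, T') ∈ bs.toList → T'.omega ≤ bs.maxW
  | .nil, _, _, _, _, h => by simp [Branches.toList] at h
  | .cons e y d T bs, _, _, _, _, h => by
    rcases List.mem_cons.1 h with heq | h
    · cases heq
      exact le_max_left _ _
    · exact le_trans (mem_maxW bs h) (le_max_right _ _)

theorem maxW_seqAll_le : ∀ (bs : Branches) (X : PT),
    (bs.seqAll X).maxW ≤ 2 * bs.maxW + X.omega
  | .nil, X => by simp [Branches.seqAll, Branches.maxW]
  | .cons e y d T bs, X => by
    have h := maxW_seqAll_le bs X
    simp only [Branches.seqAll, Branches.maxW, PT.omega]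
    apply max_le
    · have : T.omega ≤ max T.omega bs.maxW := le_max_left _ _
      omega
    · have : bs.maxW ≤ max T.omega bs.maxW := le_max_right _ _
      omega

lemma allDead_nil (e : Guard) : AllDead e .nil := by
  intro b hb; simp [Branches.toList] at hb

lemma allDead_cons {e e' : Guard} {y : Chan} {d : Srt} {T : PT} {bs : Branches} :
    AllDead e (.cons e' y d T bs) ↔ Guard.IsFalse (Guard.and e e') ∧ AllDead e bs := by
  constructor
  · intro h
    refine ⟨h (e', y, d, T) (by simp [Branches.toList]), fun b hb => h b ?_⟩
    exact List.mem_cons_of_mem _ hb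
  · rintro ⟨h1, h2⟩ b hb
    rcases List.mem_cons.1 hb with rfl | hb
    · exact h1
    · exact h2 _ hb

lemma isFalse_mono {g g' : Guard} (hf : Guard.IsFalse g)
    (h : ∀ σ, g' σ = true → g σ = true) : Guard.IsFalse g' := by
  intro σ
  cases hg : g' σ with
  | false => rfl
  | true => have := h σ hg; rw [hf σ] at this; cases this

lemma allDead_mono {a b : Guard} {bs : Branches} (h : AllDead b bs) :
    AllDead (Guard.and a b) bs := by
  intro br hbr
  refine isFalse_mono (h br hbr) (fun σ hs => ?_)
  revert hs; simp [Guard.and]; tauto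

theorem allDead_seqAll : ∀ (bs : Branches) (X : PT) (g : Guard),
    AllDead g (bs.seqAll X) ↔ AllDead g bs
  | .nil, X, g => Iff.rfl
  | .cons e y d T bs, X, g => by
    simp only [Branches.seqAll, allDead_cons]
    rw [allDead_seqAll bs X g]

/-- `AllDead` transfer along `NFBr`. -/
theorem allDead_iff_of_nfbr (a : Guard) : ∀ (n : ℕ) (bs : Branches), sizeOf bs ≤ n →
    ∀ {b : Guard} {bs' : Branches}, NFBr b bs bs' →
    (AllDead a bs' ↔ AllDead (Guard.and a b) bs) := by
  intro n
  induction n with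
  | zero =>
    intro bs h
    exact absurd h (by cases bs <;> simp)
  | succ n ih =>
    intro bs hbs b bs' hbr
    cases hbr with
    | nil => exact ⟨fun _ => allDead_nil _, fun _ => allDead_nil _⟩
    | @consDead _ e₀ bs₀ bs₁ y d T₀ hf htail =>
      have hrec := ih bs₀ (by simp at hbs; omega) htail
      rw [allDead_cons, hrec]
      have hf' : Guard.IsFalse (Guard.and (Guard.and a b) e₀) :=
        isFalse_mono hf (fun σ hs => by revert hs; simp [Guard.and]; tauto)
      exact ⟨fun h => ⟨hf', h⟩, fun h => h.2⟩
    | @consLive _ e₀ T₀ U₀ bs₀ bs₁ y d hnf hU htail =>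
      have hrec := ih bs₀ (by simp at hbs; omega) htail
      rw [allDead_cons, allDead_cons, hrec]
      have hg : Guard.and a (Guard.and e₀ b) = Guard.and (Guard.and a b) e₀ := by
        funext σ; simp only [Guard.and]
        cases a σ <;> cases b σ <;> cases e₀ σ <;> rfl
      rw [hg]

/-- `nf_end_of_endForm`. -/
theorem nf_end_of_endForm : ∀ {e : Guard} {T : PT}, EndForm e T → ∃ e', NF e T (.endP e') := by
  intro e T h
  induction h with
  | endE => exact ⟨_, NF.endN⟩
  | intE h => exact ⟨_, NF.intAllDead h⟩
  | extE h => exact ⟨_, NF.extAllDead h⟩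
  | seqEndE _ ihh => obtain ⟨x, hx⟩ := ihh; exact ⟨x, NF.seqEnd hx⟩
  | seqIntE h => exact ⟨_, NF.seqInt (NF.intAllDead ((allDead_seqAll _ _ _).2 h))⟩
  | seqExtE h => exact ⟨_, NF.seqExt (NF.extAllDead ((allDead_seqAll _ _ _).2 h))⟩
  | seqSeqE _ ihh => obtain ⟨x, hx⟩ := ihh; exact ⟨x, NF.seqSeq hx⟩
  | seqIterE _ ihh => obtain ⟨x, hx⟩ := ihh; exact ⟨x, NF.seqIterEnd hx⟩
  | iterE _ ihh => obtain ⟨x, hx⟩ := ihh; exact ⟨x, NF.iterEnd hx⟩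

theorem endForm_of_nf_end_aux : ∀ (n : ℕ) (T : PT), T.omega ≤ n →
    ∀ {e e' : Guard}, NF e T (.endP e') → EndForm e T := by
  intro n
  induction n with
  | zero => intro T h; exact absurd h (by have := PT.omega_pos T; omega)
  | succ n ih =>
    intro T hT e e' h
    cases h with
    | endN => exact EndForm.endE
    | intAllDead h => exact EndForm.intE h
    | extAllDead h => exact EndForm.extE h
    | seqEnd h2 =>
      refine EndForm.seqEndE (ih _ ?_ h2)
      simp [PT.omega] at hT; omega
    | seqInt h2 =>
      cases h2 with
      | intAllDead h3 => exact EndForm.seqIntE ((allDead_seqAll _ _ _).1 h3)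
    | seqExt h2 =>
      cases h2 with
      | extAllDead h3 => exact EndForm.seqExtE ((allDead_seqAll _ _ _).1 h3)
    | @seqSeq _ T₁ T₂ T₃ _ h2 =>
      refine EndForm.seqSeqE (ih _ ?_ h2)
      have := PT.omega_pos T₁
      simp [PT.omega] at hT ⊢; omega
    | @seqIterEnd _ T₁ _ T₂ h2 =>
      refine EndForm.seqIterE (ih _ ?_ h2)
      have := PT.omega_pos T₂
      simp [PT.omega] at hT; omega
    | iterEnd h2 =>
      refine EndForm.iterE (ih _ ?_ h2)
      simp [PT.omega] at hT; omega

theorem endForm_of_nf_end {e e' : Guard} {T : PT} (h : NF e T (.endP e')) : EndForm e T :=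
  endForm_of_nf_end_aux T.omega T le_rfl h

/-- Branch version of the composition-of-normalisations lemma. -/
theorem nfbr_iff (a : Guard) : ∀ (n : ℕ) (bs : Branches), sizeOf bs ≤ n →
    ∀ {b : Guard} {bs' : Branches}, NFBr b bs bs' →
    (∀ e' y d (T' : PT), (e', y, d, T') ∈ bs.toList → ∀ {b' : Guard} {U : PT},
      NF b' T' U → ∀ (a' : Guard) (W : PT), NF a' U W ↔ NF (Guard.and a' b') T' W) →
    ∀ cs, NFBr a bs' cs ↔ NFBr (Guard.and a b) bs cs := by
  intro n
  induction n with
  | zero =>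
    intro bs h
    exact absurd h (by cases bs <;> simp)
  | succ n ihn =>
    intro bs hbs b bs' hbr IH cs
    cases hbr with
    | nil =>
      constructor <;> intro h <;> cases h <;> exact NFBr.nil
    | @consDead _ e₀ bs₀ bs₁ y d T₀ hf htail =>
      have IH' : ∀ e' y d (T' : PT), (e', y, d, T') ∈ bs₀.toList → ∀ {b' : Guard} {U : PT},
          NF b' T' U → ∀ (a' : Guard) (W : PT), NF a' U W ↔ NF (Guard.and a' b') T' W :=
        fun e' y' d' T' hm => IH e' y' d' T' (List.mem_cons_of_mem _ hm)
      have hrec := ihn bs₀ (by simp at hbs; omega) htail IH' cs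
      have hf' : Guard.IsFalse (Guard.and (Guard.and a b) e₀) :=
        isFalse_mono hf (fun σ hs => by revert hs; simp [Guard.and]; tauto)
      constructor
      · intro h
        exact NFBr.consDead hf' (hrec.1 h)
      · intro h
        cases h with
        | consDead _ h2 => exact hrec.2 h2
        | consLive hn _ _ => exact absurd hf' hn
    | @consLive _ e₀ T₀ U₀ bs₀ bs₁ y d hnf hU htail =>
      have IH' : ∀ e' y d (T' : PT), (e', y, d, T') ∈ bs₀.toList → ∀ {b' : Guard} {U : PT},
          NF b' T' U → ∀ (a' : Guard) (W : PT), NF a' U W ↔ NF (Guard.and a' b') T' W :=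
        fun e' y' d' T' hm => IH e' y' d' T' (List.mem_cons_of_mem _ hm)
      have hrec := ihn bs₀ (by simp at hbs; omega) htail IH'
      have key := IH e₀ y d T₀ (by simp [Branches.toList]) hU
      have hg : Guard.and (Guard.and (Guard.and e₀ b) a) (Guard.and e₀ b)
          = Guard.and e₀ (Guard.and a b) := by
        funext σ; simp only [Guard.and]
        cases a σ <;> cases b σ <;> cases e₀ σ <;> rfl
      have key2 : ∀ W, NF (Guard.and (Guard.and e₀ b) a) U₀ W ↔
          NF (Guard.and e₀ (Guard.and a b)) T₀ W := by
        intro W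
        have h := key (Guard.and (Guard.and e₀ b) a) W
        rwa [hg] at h
      have hgd : Guard.and a (Guard.and e₀ b) = Guard.and (Guard.and a b) e₀ := by
        funext σ; simp only [Guard.and]
        cases a σ <;> cases b σ <;> cases e₀ σ <;> rfl
      have hgh : Guard.and (Guard.and e₀ b) a = Guard.and e₀ (Guard.and a b) := by
        funext σ; simp only [Guard.and]
        cases a σ <;> cases b σ <;> cases e₀ σ <;> rfl
      by_cases hdead : Guard.IsFalse (Guard.and a (Guard.and e₀ b))
      · have hdead' : Guard.IsFalse (Guard.and (Guard.and a b) e₀) := hgd ▸ hdead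
        constructor
        · intro h
          cases h with
          | consDead _ h2 => exact NFBr.consDead hdead' ((hrec _).1 h2)
          | consLive hn _ _ => exact absurd hdead hn
        · intro h
          cases h with
          | consDead _ h2 => exact NFBr.consDead hdead ((hrec _).2 h2)
          | consLive hn _ _ => exact absurd hdead' hn
      · have hdead' : ¬ Guard.IsFalse (Guard.and (Guard.and a b) e₀) := hgd ▸ hdead
        constructor
        · intro h
          cases h with
          | consDead hf _ => exact absurd hf hdead
          | consLive _ hW h2 =>
            rw [hgh]
            exact NFBr.consLive hdead' ((key2 _).1 hW) ((hrec _).1 h2)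
        · intro h
          cases h with
          | consDead hf _ => exact absurd hf hdead'
          | consLive _ hW h2 =>
            rw [← hgh]
            exact NFBr.consLive hdead ((key2 _).2 hW) ((hrec _).2 h2)

/-- Composition of normalisations: `nf_a (nf_b T) = nf_{a∧b} T`. -/
theorem nf_nf : ∀ (n : ℕ) (T : PT), T.omega ≤ n →
    ∀ {b : Guard} {U : PT}, NF b T U →
    ∀ (a : Guard) (W : PT), NF a U W ↔ NF (Guard.and a b) T W := by
  intro n
  induction n with
  | zero => intro T h; exact absurd h (by have := PT.omega_pos T; omega)
  | succ n ih =>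
    intro T hT b U hTU a W
    cases hTU with
    | @endN _ e' =>
      have hg : Guard.and a (Guard.and b e') = Guard.and (Guard.and a b) e' := by
        funext σ; simp only [Guard.and]
        cases a σ <;> cases b σ <;> cases e' σ <;> rfl
      constructor
      · intro h; cases h; rw [hg]; exact NF.endN
      · intro h; cases h; rw [← hg]; exact NF.endN
    | intAllDead hd =>
      have hg : Guard.and a Guard.ff = Guard.ff := by
        funext σ; simp [Guard.and, Guard.ff]
      constructor
      · intro h; cases h; rw [hg]; exact NF.intAllDead (allDead_mono hd)
      · intro h
        cases h with
        | intAllDead _ =>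
          have h0 : NF a (.endP Guard.ff) (.endP (Guard.and a Guard.ff)) := NF.endN
          rwa [hg] at h0
        | intN hnd _ => exact absurd (allDead_mono hd) hnd
    | @intN _ bs bs' hnd hbr =>
      have hAD : AllDead a bs' ↔ AllDead (Guard.and a b) bs :=
        allDead_iff_of_nfbr a (sizeOf bs) bs le_rfl hbr
      have hBR : ∀ cs, NFBr a bs' cs ↔ NFBr (Guard.and a b) bs cs := by
        refine nfbr_iff a (sizeOf bs) bs le_rfl hbr ?_
        intro e' y d T' hm b' U' hU' a' W'
        refine ih T' ?_ hU' a' W'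
        have h1 := mem_maxW bs hm
        simp [PT.omega] at hT; omega
      constructor
      · intro h
        cases h with
        | intAllDead h' => exact NF.intAllDead (hAD.1 h')
        | intN hn' hb' => exact NF.intN (fun hc => hn' (hAD.2 hc)) ((hBR _).1 hb')
      · intro h
        cases h with
        | intAllDead h' => exact NF.intAllDead (hAD.2 h')
        | intN hn' hb' => exact NF.intN (fun hc => hn' (hAD.1 hc)) ((hBR _).2 hb')
    | extAllDead hd =>
      have hg : Guard.and a Guard.ff = Guard.ff := by
        funext σ; simp [Guard.and, Guard.ff]
      constructor
      · intro h; cases h; rw [hg]; exact NF.extAllDead (allDead_mono hd)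
      · intro h
        cases h with
        | extAllDead _ =>
          have h0 : NF a (.endP Guard.ff) (.endP (Guard.and a Guard.ff)) := NF.endN
          rwa [hg] at h0
        | extN hnd _ => exact absurd (allDead_mono hd) hnd
    | @extN _ bs bs' hnd hbr =>
      have hAD : AllDead a bs' ↔ AllDead (Guard.and a b) bs :=
        allDead_iff_of_nfbr a (sizeOf bs) bs le_rfl hbr
      have hBR : ∀ cs, NFBr a bs' cs ↔ NFBr (Guard.and a b) bs cs := by
        refine nfbr_iff a (sizeOf bs) bs le_rfl hbr ?_
        intro e' y d T' hm b' U' hU' a' W'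
        refine ih T' ?_ hU' a' W'
        have h1 := mem_maxW bs hm
        simp [PT.omega] at hT; omega
      constructor
      · intro h
        cases h with
        | extAllDead h' => exact NF.extAllDead (hAD.1 h')
        | extN hn' hb' => exact NF.extN (fun hc => hn' (hAD.2 hc)) ((hBR _).1 hb')
      · intro h
        cases h with
        | extAllDead h' => exact NF.extAllDead (hAD.2 h')
        | extN hn' hb' => exact NF.extN (fun hc => hn' (hAD.1 hc)) ((hBR _).2 hb')
    | @seqEnd _ e' T₂ _ h' =>
      have hih := ih T₂ (by simp [PT.omega] at hT; omega) h' a W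
      have hg : Guard.and a (Guard.and b e') = Guard.and (Guard.and a b) e' := by
        funext σ; simp only [Guard.and]
        cases a σ <;> cases b σ <;> cases e' σ <;> rfl
      rw [hg] at hih
      constructor
      · intro h; exact NF.seqEnd (hih.1 h)
      · intro h
        cases h with
        | seqEnd h2 => exact hih.2 h2
    | @seqInt _ bs T₂ _ h' =>
      have hb : (PT.intC (bs.seqAll T₂)).omega ≤ n := by
        have h1 := maxW_seqAll_le bs T₂
        have h2 := PT.omega_pos T₂
        simp [PT.omega] at hT ⊢; omega
      have hih := ih _ hb h' a W
      constructor
      · intro h; exact NF.seqInt (hih.1 h)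
      · intro h
        cases h with
        | seqInt h2 => exact hih.2 h2
    | @seqExt _ bs T₂ _ h' =>
      have hb : (PT.extC (bs.seqAll T₂)).omega ≤ n := by
        have h1 := maxW_seqAll_le bs T₂
        have h2 := PT.omega_pos T₂
        simp [PT.omega] at hT ⊢; omega
      have hih := ih _ hb h' a W
      constructor
      · intro h; exact NF.seqExt (hih.1 h)
      · intro h
        cases h with
        | seqExt h2 => exact hih.2 h2
    | @seqSeq _ T₁ T₂ T₃ _ h' =>
      have hb : (PT.seqT T₁ (PT.seqT T₂ T₃)).omega ≤ n := by
        have := PT.omega_pos T₁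
        simp [PT.omega] at hT ⊢; omega
      have hih := ih _ hb h' a W
      constructor
      · intro h; exact NF.seqSeq (hih.1 h)
      · intro h
        cases h with
        | seqSeq h2 => exact hih.2 h2
    | @seqIterEnd _ T₁ e' T₂ h₁ =>
      have hb : T₁.omega ≤ n := by
        have := PT.omega_pos T₂
        simp [PT.omega] at hT; omega
      have hih := ih T₁ hb h₁
      constructor
      · intro h
        cases h
        exact NF.seqIterEnd ((hih a _).1 NF.endN)
      · intro h
        cases h with
        | seqIterEnd h2 =>
          have h3 := (hih a _).2 h2
          cases h3
          exact NF.endN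
        | seqIterN hne _ _ =>
          exact absurd (endForm_of_nf_end ((hih a _).1 NF.endN)) hne
    | @seqIterN _ T₁ U₁ T₂ U₂ hne h₁ h₂ =>
      have hbIt : (PT.iter T₁).omega ≤ n := by
        have := PT.omega_pos T₂
        simp [PT.omega] at hT ⊢; omega
      have hb₂ : T₂.omega ≤ n := by
        have := PT.omega_pos T₁
        simp [PT.omega] at hT; omega
      cases h₁ with
      | iterEnd hE => exact absurd (endForm_of_nf_end hE) hne
      | @iterN _ _ X hne₁ hX =>
        have hihIt := ih (PT.iter T₁) hbIt (NF.iterN hne₁ hX)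
        have hih₂ := ih T₂ hb₂ h₂
        have hEF : EndForm a X ↔ EndForm (Guard.and a b) T₁ := by
          constructor
          · intro hE
            obtain ⟨e₂, hNE⟩ := nf_end_of_endForm hE
            have h3 := (hihIt a _).1 (NF.iterEnd hNE)
            cases h3 with
            | iterEnd h4 => exact endForm_of_nf_end h4
          · intro hE
            obtain ⟨e₂, hNE⟩ := nf_end_of_endForm hE
            have h3 := (hihIt a _).2 (NF.iterEnd hNE)
            cases h3 with
            | iterEnd h4 => exact endForm_of_nf_end h4
        constructor
        · intro h
          cases h with
          | seqIterEnd hXe =>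
            have h3 := (hihIt a _).1 (NF.iterEnd hXe)
            cases h3 with
            | iterEnd h4 => exact NF.seqIterEnd h4
          | seqIterN hneX g1 g2 =>
            exact NF.seqIterN (fun hc => hneX (hEF.2 hc)) ((hihIt a _).1 g1) ((hih₂ a _).1 g2)
        · intro h
          cases h with
          | seqIterEnd hTe =>
            have h3 := (hihIt a _).2 (NF.iterEnd hTe)
            cases h3 with
            | iterEnd h4 => exact NF.seqIterEnd h4
          | seqIterN hneT g1 g2 =>
            exact NF.seqIterN (fun hc => hneT (hEF.1 hc)) ((hihIt a _).2 g1) ((hih₂ a _).2 g2)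
    | @iterEnd _ T₁ e' h₁ =>
      have hb : T₁.omega ≤ n := by simp [PT.omega] at hT; omega
      have hih := ih T₁ hb h₁
      constructor
      · intro h
        cases h
        exact NF.iterEnd ((hih a _).1 NF.endN)
      · intro h
        cases h with
        | iterEnd h2 =>
          have h3 := (hih a _).2 h2
          cases h3
          exact NF.endN
        | iterN hne _ => exact absurd (endForm_of_nf_end ((hih a _).1 NF.endN)) hne
    | @iterN _ T₁ U₁ hne h₁ =>
      have hb : T₁.omega ≤ n := by simp [PT.omega] at hT; omega
      have hih := ih T₁ hb h₁
      have hEF : EndForm a U₁ ↔ EndForm (Guard.and a b) T₁ := by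
        constructor
        · intro hE
          obtain ⟨e₂, hNE⟩ := nf_end_of_endForm hE
          exact endForm_of_nf_end ((hih a _).1 hNE)
        · intro hE
          obtain ⟨e₂, hNE⟩ := nf_end_of_endForm hE
          exact endForm_of_nf_end ((hih a _).2 hNE)
      constructor
      · intro h
        cases h with
        | iterEnd h2 => exact NF.iterEnd ((hih a _).1 h2)
        | iterN hne' h2 => exact NF.iterN (fun hc => hne' (hEF.2 hc)) ((hih a _).1 h2)
      · intro h
        cases h with
        | iterEnd h2 => exact NF.iterEnd ((hih a _).2 h2)
        | iterN hne' h2 => exact NF.iterN (fun hc => hne' (hEF.1 hc)) ((hih a _).2 h2)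

/-- Branch helper for `seq_congr`. -/
theorem nfbr_seqAll : ∀ (m : ℕ) (bs : Branches), sizeOf bs ≤ m →
    ∀ (e e'' : Guard) (A B : PT),
    (∀ e' y d (T' : PT), (e', y, d, T') ∈ bs.toList →
      ∀ e₂, Guard.Imp e₂ e → ∀ V, NF e₂ (.seqT T' A) V ↔ NF e₂ (.seqT T' B) V) →
    Guard.Imp e'' e →
    ∀ cs, NFBr e'' (bs.seqAll A) cs ↔ NFBr e'' (bs.seqAll B) cs := by
  intro m
  induction m with
  | zero =>
    intro bs h
    exact absurd h (by cases bs <;> simp)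
  | succ m ihm =>
    intro bs hbs e e'' A B IH h'' cs
    cases bs with
    | nil => exact Iff.rfl
    | cons e₀ y d T₀ bs₀ =>
      simp only [Branches.seqAll]
      have IH' : ∀ e' y' d' (T' : PT), (e', y', d', T') ∈ bs₀.toList →
          ∀ e₂, Guard.Imp e₂ e → ∀ V, NF e₂ (.seqT T' A) V ↔ NF e₂ (.seqT T' B) V :=
        fun e' y' d' T' hm => IH e' y' d' T' (List.mem_cons_of_mem _ hm)
      have hrec := ihm bs₀ (by simp at hbs; omega) e e'' A B IH' h''
      have hkey := IH e₀ y d T₀ (by simp [Branches.toList]) (Guard.and e₀ e'')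
        (fun σ hσ => h'' σ (by simp only [Guard.and, Bool.and_eq_true] at hσ; exact hσ.2))
      constructor
      · intro h
        cases h with
        | consDead hf h2 => exact NFBr.consDead hf ((hrec _).1 h2)
        | consLive hn hW h2 => exact NFBr.consLive hn ((hkey _).1 hW) ((hrec _).1 h2)
      · intro h
        cases h with
        | consDead hf h2 => exact NFBr.consDead hf ((hrec _).2 h2)
        | consLive hn hW h2 => exact NFBr.consLive hn ((hkey _).2 hW) ((hrec _).2 h2)

/-- Congruence of normalisation of sequences in the second argument. -/
theorem seq_congr : ∀ (n : ℕ) (T : PT), T.omega ≤ n → ∀ (e : Guard) (A B : PT),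
    (∀ e₂, Guard.Imp e₂ e → ∀ V, NF e₂ A V ↔ NF e₂ B V) →
    ∀ e'', Guard.Imp e'' e → ∀ V, NF e'' (.seqT T A) V ↔ NF e'' (.seqT T B) V := by
  intro n
  induction n with
  | zero => intro T h; exact absurd h (by have := PT.omega_pos T; omega)
  | succ n ih =>
    intro T hT e A B H e'' h'' V
    cases T with
    | endP e₀ =>
      have hI : Guard.Imp (Guard.and e'' e₀) e :=
        fun σ hσ => h'' σ (by revert hσ; simp [Guard.and]; tauto)
      constructor
      · intro h
        cases h with
        | seqEnd h2 => exact NF.seqEnd ((H _ hI V).1 h2)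
      · intro h
        cases h with
        | seqEnd h2 => exact NF.seqEnd ((H _ hI V).2 h2)
    | intC bs =>
      have hbr : ∀ cs, NFBr e'' (bs.seqAll A) cs ↔ NFBr e'' (bs.seqAll B) cs := by
        refine nfbr_seqAll (sizeOf bs) bs le_rfl e e'' A B ?_ h''
        intro e' y d T' hm e₂ h₂ V'
        refine ih T' ?_ e A B H e₂ h₂ V'
        have h1 := mem_maxW bs hm
        simp [PT.omega] at hT; omega
      have hAD : AllDead e'' (bs.seqAll A) ↔ AllDead e'' (bs.seqAll B) := by
        rw [allDead_seqAll, allDead_seqAll]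
      have key : ∀ V, NF e'' (.intC (bs.seqAll A)) V ↔ NF e'' (.intC (bs.seqAll B)) V := by
        intro V'
        constructor
        · intro h
          cases h with
          | intAllDead h2 => exact NF.intAllDead (hAD.1 h2)
          | intN hn h2 => exact NF.intN (fun hc => hn (hAD.2 hc)) ((hbr _).1 h2)
        · intro h
          cases h with
          | intAllDead h2 => exact NF.intAllDead (hAD.2 h2)
          | intN hn h2 => exact NF.intN (fun hc => hn (hAD.1 hc)) ((hbr _).2 h2)
      constructor
      · intro h
        cases h with
        | seqInt h2 => exact NF.seqInt ((key V).1 h2)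
      · intro h
        cases h with
        | seqInt h2 => exact NF.seqInt ((key V).2 h2)
    | extC bs =>
      have hbr : ∀ cs, NFBr e'' (bs.seqAll A) cs ↔ NFBr e'' (bs.seqAll B) cs := by
        refine nfbr_seqAll (sizeOf bs) bs le_rfl e e'' A B ?_ h''
        intro e' y d T' hm e₂ h₂ V'
        refine ih T' ?_ e A B H e₂ h₂ V'
        have h1 := mem_maxW bs hm
        simp [PT.omega] at hT; omega
      have hAD : AllDead e'' (bs.seqAll A) ↔ AllDead e'' (bs.seqAll B) := by
        rw [allDead_seqAll, allDead_seqAll]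
      have key : ∀ V, NF e'' (.extC (bs.seqAll A)) V ↔ NF e'' (.extC (bs.seqAll B)) V := by
        intro V'
        constructor
        · intro h
          cases h with
          | extAllDead h2 => exact NF.extAllDead (hAD.1 h2)
          | extN hn h2 => exact NF.extN (fun hc => hn (hAD.2 hc)) ((hbr _).1 h2)
        · intro h
          cases h with
          | extAllDead h2 => exact NF.extAllDead (hAD.2 h2)
          | extN hn h2 => exact NF.extN (fun hc => hn (hAD.1 hc)) ((hbr _).2 h2)
      constructor
      · intro h
        cases h with
        | seqExt h2 => exact NF.seqExt ((key V).1 h2)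
      · intro h
        cases h with
        | seqExt h2 => exact NF.seqExt ((key V).2 h2)
    | seqT T₁ T₂ =>
      have hb₁ : T₁.omega ≤ n := by
        have := PT.omega_pos T₂
        simp [PT.omega] at hT; omega
      have hb₂ : T₂.omega ≤ n := by
        have := PT.omega_pos T₁
        simp [PT.omega] at hT; omega
      have H2 : ∀ e₂, Guard.Imp e₂ e → ∀ V, NF e₂ (.seqT T₂ A) V ↔ NF e₂ (.seqT T₂ B) V :=
        fun e₂ h₂ V' => ih T₂ hb₂ e A B H e₂ h₂ V'
      have key := ih T₁ hb₁ e (.seqT T₂ A) (.seqT T₂ B) H2 e'' h''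
      constructor
      · intro h
        cases h with
        | seqSeq h2 => exact NF.seqSeq ((key V).1 h2)
      · intro h
        cases h with
        | seqSeq h2 => exact NF.seqSeq ((key V).2 h2)
    | iter T₁ =>
      constructor
      · intro h
        cases h with
        | seqIterEnd h2 => exact NF.seqIterEnd h2
        | seqIterN hne g1 g2 => exact NF.seqIterN hne g1 ((H e'' h'' _).1 g2)
      · intro h
        cases h with
        | seqIterEnd h2 => exact NF.seqIterEnd h2
        | seqIterN hne g1 g2 => exact NF.seqIterN hne g1 ((H e'' h'' _).2 g2)

/-- **Lemma (normalisation and sequential composition).** For every guard `e`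
and all pseudo-types `𝕋, 𝕋'`:  `nf_e(𝕋 ; nf_e(𝕋')) = nf_e(𝕋 ; 𝕋')`. -/
theorem nf_seq_composition (e : Guard) (T T' U : PT) (hU : NF e T' U) :
    ∀ V, NF e (.seqT T U) V ↔ NF e (.seqT T T') V := by
  intro V
  have hmain := nf_nf T'.omega T' le_rfl hU
  have H : ∀ e₂, Guard.Imp e₂ e → ∀ W, NF e₂ U W ↔ NF e₂ T' W := by
    intro e₂ h₂ W
    have hg : Guard.and e₂ e = e₂ := by
      funext σ
      simp only [Guard.and]
      cases he : e₂ σ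
      · rfl
      · simp [h₂ σ he]
    have h := hmain e₂ W
    rwa [hg] at h
  exact seq_congr T.omega T le_rfl e U T' H e (fun σ h => h) V

end WSI
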